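/- Let b ≥ 2 be an integer. There exist constants σ_∞(b) > 0 and C_b > 0, depending only on b, such that for all integers h, q, k, M, N with q ≥ 2, gcd(q, h(b³−b)) = 1 and 0 ≤ M ≤ 2N, one has P_M(h/q + k/(b³−b)) ≤ C_b · b^M · exp( −σ_∞(b) · M / log q ). -/

import Mathlib

open Real


noncomputable def nint (x : ℝ) : ℝ := |x - round x|

lemma nint_nonneg (x : ℝ) : 0 ≤ nint x := abs_nonneg _

lemma nint_le_half (x : ℝ) : nint x ≤ 1/2 := by
  simpa [nint] using abs_sub_round x

lemma nint_le (x : ℝ) (m : ℤ) : nint x ≤ |x - m| := by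
  by_cases hm : m = round x
  · simp [nint, hm]
  · have h1 : (1:ℝ) ≤ |(m:ℝ) - round x| := by
      have : (1:ℤ) ≤ |m - round x| := Int.one_le_abs (by omega)
      exact_mod_cast this
    have h2 : |(m:ℝ) - round x| ≤ |x - m| + |x - round x| := by
      calc |(m:ℝ) - round x| = |(x - (round x:ℝ)) - (x - m)| := by congr 1; ring
      _ ≤ |x - (round x:ℝ)| + |x - m| := abs_sub _ _
      _ = |x - m| + |x - round x| := by ring
    have h3 : |x - (round x : ℝ)| ≤ 1/2 := abs_sub_round x
    have : (1:ℝ)/2 ≤ |x - m| := by linarith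
    calc nint x ≤ 1/2 := nint_le_half x
    _ ≤ |x - m| := this

lemma nint_eq_of_sub_int (x y : ℝ) (m : ℤ) (hxy : x - y = m) : nint x = nint y := by
  refine le_antisymm ?_ ?_
  · calc nint x ≤ |x - (round y + m : ℤ)| := nint_le _ _
    _ = |y - round y| := by push_cast; congr 1; linarith
    _ = nint y := rfl
  · calc nint y ≤ |y - (round x - m : ℤ)| := nint_le _ _
    _ = |x - round x| := by push_cast; congr 1; linarith
    _ = nint x := rfl

lemma nint_add_int (x : ℝ) (m : ℤ) : nint (x + m) = nint x :=
  nint_eq_of_sub_int _ _ m (by ring)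

lemma nint_neg (x : ℝ) : nint (-x) = nint x := by
  refine le_antisymm ?_ ?_
  · calc nint (-x) ≤ |-x - (-(round x) : ℤ)| := nint_le _ _
    _ = |x - round x| := by push_cast; rw [← abs_neg]; congr 1; ring
    _ = nint x := rfl
  · calc nint x ≤ |x - (-(round (-x)) : ℤ)| := nint_le _ _
    _ = |-x - round (-x)| := by push_cast; rw [← abs_neg]; congr 1; ring
    _ = nint (-x) := rfl

lemma nint_add_le (x y : ℝ) : nint (x + y) ≤ nint x + nint y := by
  calc nint (x + y) ≤ |x + y - (round x + round y : ℤ)| := nint_le _ _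
  _ = |(x - round x) + (y - round y)| := by push_cast; congr 1; ring
  _ ≤ |x - round x| + |y - round y| := abs_add_le _ _

lemma nint_nat_mul_le (n : ℕ) (x : ℝ) : nint (n * x) ≤ n * nint x := by
  calc nint (n * x) ≤ |n * x - (n * round x : ℤ)| := nint_le _ _
  _ = |(n:ℝ) * (x - round x)| := by push_cast; congr 1; ring
  _ = (n:ℝ) * |x - round x| := by rw [abs_mul, abs_of_nonneg (by positivity : (0:ℝ) ≤ (n:ℝ))]
  _ = n * nint x := rfl

lemma round_cast_abs_ge {x : ℝ} (h0 : round x ≠ 0) : (1:ℝ) ≤ |(round x : ℝ)| := by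
  have : (1:ℤ) ≤ |round x| := Int.one_le_abs (by omega)
  exact_mod_cast this

lemma nint_eq_abs {x : ℝ} (h : |x| ≤ 1/2) : nint x = |x| := by
  refine le_antisymm (by simpa using nint_le x 0) ?_
  by_cases h0 : round x = 0
  · simp [nint, h0]
  · have h1 := round_cast_abs_ge h0
    have h2 : |(round x : ℝ)| - |x| ≤ |x - round x| := by
      calc |(round x:ℝ)| - |x| ≤ |(round x:ℝ) - x| := abs_sub_abs_le_abs_sub _ _
      _ = |x - round x| := abs_sub_comm _ _
    simp only [nint]; linarith

lemma one_sub_le_nint {x : ℝ} (h : 1/2 ≤ |x|) : 1 - |x| ≤ nint x := by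
  by_cases h0 : round x = 0
  · simp only [nint, h0, Int.cast_zero, sub_zero]; linarith
  · have h1 := round_cast_abs_ge h0
    have h2 : |(round x : ℝ)| - |x| ≤ |x - round x| := by
      calc |(round x:ℝ)| - |x| ≤ |(round x:ℝ) - x| := abs_sub_abs_le_abs_sub _ _
      _ = |x - round x| := abs_sub_comm _ _
    simp only [nint]; linarith

lemma nint_step {b : ℕ} (hb : 2 ≤ b) {x : ℝ}
    (h1 : nint x < 1/(b+1)) (h2 : nint (b*x) < 1/(b+1)) :
    nint (b*x) = b * nint x := by
  have hbR : (2:ℝ) ≤ b := by exact_mod_cast hb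
  set y := x - (round x : ℝ) with hy
  have hxy : (b:ℝ)*x - (b:ℝ)*y = ((b * round x : ℤ) : ℝ) := by push_cast; ring
  have hshift : nint ((b:ℝ)*x) = nint ((b:ℝ)*y) := nint_eq_of_sub_int _ _ _ hxy
  have hyabs : |y| = nint x := rfl
  rcases le_or_gt |(b:ℝ)*y| (1/2) with hc | hc
  · rw [hshift, nint_eq_abs hc, abs_mul, abs_of_nonneg (by positivity : (0:ℝ) ≤ (b:ℝ)), hyabs]
  · exfalso
    have h3 : 1 - |(b:ℝ)*y| ≤ nint ((b:ℝ)*y) := one_sub_le_nint (le_of_lt hc)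
    have h4 : |(b:ℝ)*y| = (b:ℝ) * nint x := by
      rw [abs_mul, abs_of_nonneg (by positivity : (0:ℝ) ≤ (b:ℝ)), hyabs]
    have h5 : (b:ℝ) * nint x < (b:ℝ)/(b+1) := by
      have := mul_lt_mul_of_pos_left h1 (by positivity : (0:ℝ) < (b:ℝ))
      calc (b:ℝ) * nint x < (b:ℝ) * (1/(b+1)) := this
      _ = (b:ℝ)/(b+1) := by ring
    have h6 : 1/((b:ℝ)+1) ≤ nint ((b:ℝ)*y) := by
      have : 1 - (b:ℝ)/(b+1) = 1/((b:ℝ)+1) := by field_simp; ring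
      rw [h4] at h3; linarith
    rw [hshift] at h2; linarith

lemma nint_orbit {b q D : ℕ} (hb : 2 ≤ b) (hq : 2 ≤ q) (hD : q ≤ b^D) {x : ℝ}
    (hx : 1/(q:ℝ) ≤ nint x) : ∃ j ≤ D, 1/((b:ℝ)+1) ≤ nint ((b:ℝ)^j * x) := by
  by_contra hcon
  push_neg at hcon
  have key : ∀ j ≤ D, nint ((b:ℝ)^j * x) = (b:ℝ)^j * nint x := by
    intro j hj
    induction j with
    | zero => simp
    | succ j ih =>
      have hj' : j ≤ D := by omega
      have e1 : (b:ℝ)^(j+1) * x = (b:ℝ) * ((b:ℝ)^j * x) := by ring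
      rw [e1, nint_step hb (by rw [ih hj']; exact lt_of_le_of_lt (le_of_eq (ih hj').symm) (by rw [ih hj']; exact (ih hj') ▸ hcon j hj') ) (by rw [← e1]; exact hcon (j+1) hj), ih hj']
      ring
  have hD2 : nint ((b:ℝ)^D * x) = (b:ℝ)^D * nint x := key D le_rfl
  have hq0 : (0:ℝ) < q := by positivity
  have h1 : (1:ℝ) ≤ (b:ℝ)^D / q := by
    rw [le_div_iff₀ hq0]
    have : (q:ℝ) ≤ (b:ℝ)^D := by exact_mod_cast hD
    linarith
  have h2 : (b:ℝ)^D / q ≤ (b:ℝ)^D * nint x := by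
    rw [div_eq_mul_one_div]
    exact mul_le_mul_of_nonneg_left hx (by positivity)
  have := nint_le_half ((b:ℝ)^D * x)
  rw [hD2] at this
  linarith

lemma nint_int_div_ge {q : ℕ} (hq : 2 ≤ q) {r : ℤ} (hr : ¬ (q:ℤ) ∣ r) :
    1/(q:ℝ) ≤ nint ((r:ℝ)/q) := by
  have hq0 : (0:ℝ) < q := by positivity
  have key : ∀ m : ℤ, 1/(q:ℝ) ≤ |(r:ℝ)/q - m| := by
    intro m
    have hne : r - m * q ≠ 0 := by
      intro hc
      refine hr ⟨m, ?_⟩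
      linarith [hc]
    have h1 : (1:ℝ) ≤ |((r - m * q : ℤ) : ℝ)| := by
      have : (1:ℤ) ≤ |r - m * q| := Int.one_le_abs hne
      exact_mod_cast this
    have h2 : |(r:ℝ)/q - m| = |((r - m * q : ℤ) : ℝ)| / q := by
      rw [show ((r - m * q : ℤ) : ℝ) = ((r:ℝ)/q - m) * q by push_cast; field_simp,
        abs_mul, abs_of_nonneg (le_of_lt hq0), mul_div_assoc,
        div_self (ne_of_gt hq0), mul_one]
    rw [h2, le_div_iff₀ hq0, one_div, inv_mul_cancel₀ (ne_of_gt hq0)]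
    linarith
  calc 1/(q:ℝ) ≤ |(r:ℝ)/q - round ((r:ℝ)/q)| := key _
  _ = nint ((r:ℝ)/q) := rfl

/-- `φ_b(α) = |∑_{0 ≤ m < b} e(αm)|` where `e(x) = exp(2πix)`. -/
noncomputable def phiB (b : ℕ) (α : ℝ) : ℝ :=
  ‖∑ m ∈ Finset.range b, Complex.exp (2 * Real.pi * Complex.I * (α * m))‖


lemma phiB_nonneg (b : ℕ) (θ : ℝ) : 0 ≤ phiB b θ := norm_nonneg _

lemma norm_term (θ : ℝ) (m : ℕ) :
    ‖Complex.exp (2 * Real.pi * Complex.I * (θ * m))‖ = 1 := by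
  rw [Complex.norm_exp]
  have : (2 * Real.pi * Complex.I * (θ * m)).re = 0 := by
    have : (2 * Real.pi * Complex.I * (θ * m)) = ((2 * Real.pi * θ * m : ℝ) : ℂ) * Complex.I := by
      push_cast; ring
    rw [this]
    simp
  rw [this, Real.exp_zero]

lemma phiB_le (b : ℕ) (θ : ℝ) : phiB b θ ≤ b := by
  calc phiB b θ ≤ ∑ m ∈ Finset.range b, ‖Complex.exp (2 * Real.pi * Complex.I * (θ * m))‖ :=
        norm_sum_le _ _
  _ = ∑ m ∈ Finset.range b, (1:ℝ) := by
        exact Finset.sum_congr rfl fun m _ => norm_term θ m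
  _ = b := by simp

lemma one_add_exp_norm (θ : ℝ) :
    ‖(1 : ℂ) + Complex.exp (((2 * Real.pi * θ : ℝ)) * Complex.I)‖ =
      Real.sqrt (2 + 2 * Real.cos (2 * Real.pi * θ)) := by
  rw [Complex.exp_mul_I, ← Complex.ofReal_cos, ← Complex.ofReal_sin]
  have : (1 : ℂ) + (((Real.cos (2*Real.pi*θ) : ℝ) : ℂ) + ((Real.sin (2*Real.pi*θ) : ℝ) : ℂ) * Complex.I)
      = (((1 + Real.cos (2*Real.pi*θ) : ℝ)) : ℂ) + ((Real.sin (2*Real.pi*θ) : ℝ) : ℂ) * Complex.I := by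
    push_cast; ring
  rw [this, Complex.norm_def, Complex.normSq_add_mul_I]
  congr 1
  have := Real.sin_sq_add_cos_sq (2*Real.pi*θ)
  nlinarith

lemma phiB_le' {b : ℕ} (hb : 2 ≤ b) (θ : ℝ) :
    phiB b θ ≤ ((b:ℝ) - 2) + Real.sqrt (2 + 2 * Real.cos (2 * Real.pi * θ)) := by
  have hsplit : ∑ m ∈ Finset.range b, Complex.exp (2 * Real.pi * Complex.I * (θ * m))
      = (∑ m ∈ Finset.range 2, Complex.exp (2 * Real.pi * Complex.I * (θ * m)))
        + ∑ m ∈ Finset.Ico 2 b, Complex.exp (2 * Real.pi * Complex.I * (θ * m)) := by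
    rw [Finset.range_eq_Ico]
    exact (Finset.sum_Ico_consecutive _ (by omega : 0 ≤ 2) hb).symm
  have h2 : ∑ m ∈ Finset.range 2, Complex.exp (2 * Real.pi * Complex.I * (θ * m))
      = 1 + Complex.exp (((2 * Real.pi * θ : ℝ)) * Complex.I) := by
    rw [Finset.sum_range_succ, Finset.sum_range_one]
    congr 1
    · norm_num
    · congr 1; push_cast; ring
  calc phiB b θ ≤ ‖∑ m ∈ Finset.range 2, Complex.exp (2 * Real.pi * Complex.I * (θ * m))‖
        + ‖∑ m ∈ Finset.Ico 2 b, Complex.exp (2 * Real.pi * Complex.I * (θ * m))‖ := by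
        rw [phiB, hsplit]; exact norm_add_le _ _
  _ ≤ Real.sqrt (2 + 2 * Real.cos (2 * Real.pi * θ)) + ((b:ℝ) - 2) := by
      gcongr
      · rw [h2, one_add_exp_norm]
      · calc ‖∑ m ∈ Finset.Ico 2 b, Complex.exp (2 * Real.pi * Complex.I * (θ * m))‖
            ≤ ∑ m ∈ Finset.Ico 2 b, ‖Complex.exp (2 * Real.pi * Complex.I * (θ * m))‖ :=
              norm_sum_le _ _
        _ = ∑ m ∈ Finset.Ico 2 b, (1:ℝ) := Finset.sum_congr rfl fun m _ => norm_term θ m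
        _ = ((b:ℝ) - 2) := by
            rw [Finset.sum_const, Nat.card_Ico, nsmul_eq_mul, mul_one]
            have : (2:ℕ) ≤ b := hb
            push_cast [Nat.cast_sub this]
            ring
  _ = ((b:ℝ) - 2) + Real.sqrt (2 + 2 * Real.cos (2 * Real.pi * θ)) := by ring

lemma cos_nint (θ : ℝ) : Real.cos (2 * Real.pi * θ) = Real.cos (2 * Real.pi * nint θ) := by
  have h1 : θ = (round θ : ℝ) + (θ - round θ) := by ring
  have h2 : Real.cos (2 * Real.pi * θ) = Real.cos (2 * Real.pi * (θ - round θ)) := by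
    conv_lhs => rw [h1]
    rw [show 2 * Real.pi * ((round θ : ℝ) + (θ - round θ))
        = 2 * Real.pi * (θ - round θ) + (round θ : ℤ) * (2 * Real.pi) by push_cast; ring]
    exact Real.cos_add_int_mul_two_pi _ _
  rw [h2, nint]
  rcases abs_cases (θ - (round θ : ℝ)) with ⟨he, _⟩ | ⟨he, _⟩
  · rw [he]
  · rw [he, show 2 * Real.pi * -(θ - round θ) = -(2 * Real.pi * (θ - round θ)) by ring,
      Real.cos_neg]

lemma phiB_gain {b : ℕ} (hb : 2 ≤ b) {θ : ℝ} {ε : ℝ} (hε0 : 0 < ε) (hε2 : ε ≤ 1/2)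
    (hθ : ε ≤ nint θ) :
    phiB b θ ≤ (b:ℝ) - (2 - Real.sqrt (2 + 2 * Real.cos (2 * Real.pi * ε))) := by
  have hcc : Real.cos (2 * Real.pi * θ) ≤ Real.cos (2 * Real.pi * ε) := by
    rw [cos_nint]
    have hhalf := nint_le_half θ
    have hpi := Real.pi_pos
    exact Real.cos_le_cos_of_nonneg_of_le_pi (by positivity)
      (by nlinarith) (by nlinarith)
  calc phiB b θ ≤ ((b:ℝ) - 2) + Real.sqrt (2 + 2 * Real.cos (2 * Real.pi * θ)) := phiB_le' hb θ
  _ ≤ ((b:ℝ) - 2) + Real.sqrt (2 + 2 * Real.cos (2 * Real.pi * ε)) := by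
      gcongr
  _ = (b:ℝ) - (2 - Real.sqrt (2 + 2 * Real.cos (2 * Real.pi * ε))) := by ring


lemma exists_good (b : ℕ) (hb : 2 ≤ b) (h k : ℤ) (q N : ℕ) (hq : 2 ≤ q)
    (hgcd : Int.gcd (q : ℤ) (h * ((b : ℤ) ^ 3 - b)) = 1)
    (n0 : ℕ) (hn0 : 1 ≤ n0) (hup : n0 + Nat.clog b q + 1 ≤ 2 * N) :
    ∃ m, n0 ≤ m ∧ m ≤ n0 + Nat.clog b q + 1 ∧
      1/((b:ℝ)+1)^2 ≤ nint (((h:ℝ)/q + (k:ℝ)/((b:ℝ)^3 - b)) *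
        ((b:ℝ)^m + (b:ℝ)^(2*N - m))) := by
  have hb1 : 1 < b := by omega
  have hbR : (2:ℝ) ≤ (b:ℝ) := by exact_mod_cast hb
  have hq0 : (0:ℝ) < (q:ℝ) := by positivity
  have hb3gt : (0:ℝ) < (b:ℝ)^3 - (b:ℝ) := by
    have h1 : (0:ℝ) < (b:ℝ) := by linarith
    have h2 : (0:ℝ) < (b:ℝ) * (((b:ℝ)-1)*((b:ℝ)+1)) :=
      mul_pos h1 (mul_pos (by linarith) (by linarith))
    nlinarith [h2]
  have hb3 : (b:ℝ)^3 - (b:ℝ) ≠ 0 := ne_of_gt hb3gt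
  set α : ℝ := (h:ℝ)/q + (k:ℝ)/((b:ℝ)^3 - b) with hα
  set D := Nat.clog b q with hD
  -- coprimality
  have hco : IsCoprime (q:ℤ) (h * ((b:ℤ)^3 - b)) := Int.isCoprime_iff_gcd_eq_one.mpr hgcd
  have hco1 : IsCoprime (q:ℤ) (h * ((b:ℤ)^2 - 1)) := by
    have e : h * ((b:ℤ)^3 - b) = (h * ((b:ℤ)^2 - 1)) * b := by ring
    rw [e] at hco
    exact hco.of_mul_right_left
  have hcob : IsCoprime (q:ℤ) (b:ℤ) := by
    have e : h * ((b:ℤ)^3 - b) = (h * ((b:ℤ)^2 - 1)) * b := by ring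
    rw [e] at hco
    exact hco.of_mul_right_right
  have hndvd : ∀ n : ℕ, ¬ (q:ℤ) ∣ (h * ((b:ℤ)^2 - 1) * (b:ℤ)^n) := by
    intro n hdvd
    have hcop : IsCoprime (q:ℤ) (h * ((b:ℤ)^2 - 1) * (b:ℤ)^n) :=
      hco1.mul_right (hcob.pow_right)
    have := hcop.isUnit_of_dvd' dvd_rfl hdvd
    rw [Int.isUnit_iff] at this
    omega
  -- the orbit
  set x : ℝ := ((h * ((b:ℤ)^2 - 1) * (b:ℤ)^n0 : ℤ) : ℝ) / q with hx
  have hxlb : 1/(q:ℝ) ≤ nint x := nint_int_div_ge hq (hndvd n0)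
  have hDq : q ≤ b ^ D := Nat.le_pow_clog hb1 q
  obtain ⟨j, hjD, hj⟩ := nint_orbit hb hq hDq hxlb
  set n := n0 + j with hn
  have hn1 : 1 ≤ n := by omega
  have hn2N : n + 1 ≤ 2 * N := by omega
  -- rewrite b^j * x
  have hbjx : (b:ℝ)^j * x = ((h * ((b:ℤ)^2 - 1) * (b:ℤ)^n : ℤ) : ℝ) / q := by
    rw [hx, hn]
    push_cast
    field_simp
    ring
  -- the key identity
  obtain ⟨p, hp⟩ : ∃ p, n = p + 1 := ⟨n - 1, by omega⟩
  set θ : ℕ → ℝ := fun m => α * ((b:ℝ)^m + (b:ℝ)^(2*N - m)) with hθ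
  have hiden : (b:ℝ) * θ (n+1) - θ n
      = ((h * ((b:ℤ)^2 - 1) * (b:ℤ)^n : ℤ) : ℝ) / q + ((k * (b:ℤ)^p : ℤ) : ℝ) := by
    have e1 : 2*N - n = (2*N - (n+1)) + 1 := by omega
    rw [hθ]
    simp only
    rw [e1, hα, hp]
    push_cast
    have hb21 : (b:ℝ)^2 - 1 ≠ 0 := by nlinarith
    have hb21' : -1 + (b:ℝ)^2 ≠ 0 := by nlinarith
    field_simp
    ring
  have hnint1 : 1/((b:ℝ)+1) ≤ nint ((b:ℝ) * θ (n+1) - θ n) := by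
    have : nint ((b:ℝ) * θ (n+1) - θ n) = nint ((b:ℝ)^j * x) := by
      rw [hbjx]
      apply nint_eq_of_sub_int _ _ (k * (b:ℤ)^p)
      rw [hiden]; ring
    rw [this]; exact hj
  -- split into the two candidates
  have htri : nint ((b:ℝ) * θ (n+1) - θ n) ≤ (b:ℝ) * nint (θ (n+1)) + nint (θ n) := by
    calc nint ((b:ℝ) * θ (n+1) - θ n) ≤ nint ((b:ℝ) * θ (n+1)) + nint (-(θ n)) := by
          rw [sub_eq_add_neg]; exact nint_add_le _ _
    _ = nint ((b:ℝ) * θ (n+1)) + nint (θ n) := by rw [nint_neg]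
    _ ≤ (b:ℝ) * nint (θ (n+1)) + nint (θ n) := by
        have := nint_nat_mul_le b (θ (n+1))
        gcongr
  have hbp : (0:ℝ) < (b:ℝ) + 1 := by linarith
  by_cases hcase : 1/((b:ℝ)+1)^2 ≤ nint (θ n)
  · exact ⟨n, by omega, by omega, hcase⟩
  · refine ⟨n+1, by omega, by omega, ?_⟩
    push_neg at hcase
    have h1 : 1/((b:ℝ)+1) - 1/((b:ℝ)+1)^2 ≤ (b:ℝ) * nint (θ (n+1)) := by linarith
    have h2 : 1/((b:ℝ)+1) - 1/((b:ℝ)+1)^2 = (b:ℝ)/((b:ℝ)+1)^2 := by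
      field_simp
      ring
    rw [h2] at h1
    have hb0 : (0:ℝ) < (b:ℝ) := by linarith
    have e : (b:ℝ)/((b:ℝ)+1)^2 = (b:ℝ) * (1/((b:ℝ)+1)^2) := by ring
    rw [e] at h1
    have h3 : 1/((b:ℝ)+1)^2 ≤ nint (θ (n+1)) := (mul_le_mul_iff_right₀ hb0).mp h1
    exact h3

/-- `P_M(α) = ∏_{1 ≤ n ≤ M} φ_b(α(bⁿ + b^{2N-n}))` (depending also on `b` and `N`). -/
noncomputable def palProd (b N M : ℕ) (α : ℝ) : ℝ :=
  ∏ n ∈ Finset.Icc 1 M, phiB b (α * ((b : ℝ) ^ n + (b : ℝ) ^ (2 * N - n)))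

set_option maxHeartbeats 2000000 in
/-- Col's `L^∞`-bound: `P_M(h/q + k/(b³-b)) ≤ C_b · b^M · exp(-σ_∞(b) M / log q)`
uniformly in `h`, `k`, `N`, for `q ≥ 2` with `gcd(q, h(b³-b)) = 1` and `0 ≤ M ≤ 2N`. -/
theorem col_Linfty_bound (b : ℕ) (hb : 2 ≤ b) :
    ∃ σ C : ℝ, 0 < σ ∧ 0 < C ∧ ∀ (h k : ℤ) (q M N : ℕ), 2 ≤ q → M ≤ 2 * N →
      Int.gcd (q : ℤ) (h * ((b : ℤ) ^ 3 - b)) = 1 →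
      palProd b N M ((h : ℝ) / q + (k : ℝ) / ((b : ℝ) ^ 3 - b)) ≤
        C * (b : ℝ) ^ M * Real.exp (-σ * M / Real.log q) := by
  have hbR : (2:ℝ) ≤ (b:ℝ) := by exact_mod_cast hb
  have hb0 : (0:ℝ) < (b:ℝ) := by linarith
  set ε : ℝ := 1/((b:ℝ)+1)^2 with hε
  have hε0 : 0 < ε := by positivity
  have hε2 : ε ≤ 1/2 := by
    rw [hε, div_le_div_iff₀ (by positivity) (by norm_num)]
    nlinarith
  set δ' : ℝ := 2 - Real.sqrt (2 + 2*Real.cos (2*Real.pi*ε)) with hδ'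
  have hpi := Real.pi_pos
  have hcos1 : Real.cos (2*Real.pi*ε) < 1 := by
    have := Real.cos_lt_cos_of_nonneg_of_le_pi (le_refl (0:ℝ)) (by nlinarith : 2*Real.pi*ε ≤ Real.pi) (by positivity)
    simpa using this
  have hcosm1 : (-1:ℝ) ≤ Real.cos (2*Real.pi*ε) := Real.neg_one_le_cos _
  have hδ'0 : 0 < δ' := by
    rw [hδ', sub_pos]
    have := (Real.sqrt_lt' (by norm_num : (0:ℝ) < 2)).mpr
      (by nlinarith : 2 + 2*Real.cos (2*Real.pi*ε) < 2^2)
    exact this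
  set δ : ℝ := δ'/(b:ℝ) with hδ
  have hδ0 : 0 < δ := by positivity
  have hlogb : 0 < Real.log b := Real.log_pos (by exact_mod_cast (by omega : 1 < b))
  have hlog2 : 0 < Real.log 2 := Real.log_pos one_lt_two
  set K : ℝ := 1/Real.log b + 3/Real.log 2 with hK
  have hK0 : 0 < K := by positivity
  refine ⟨δ/K, Real.exp δ, by positivity, Real.exp_pos _, ?_⟩
  intro h k q M N hq hMN hgcd
  have hq1 : (1:ℝ) < (q:ℝ) := by exact_mod_cast (by omega : 1 < q)
  have hlogq : 0 < Real.log q := Real.log_pos hq1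
  set α : ℝ := (h:ℝ)/q + (k:ℝ)/((b:ℝ)^3 - b) with hα
  set D := Nat.clog b q with hD
  set L := D + 2 with hL
  set W := M / L with hW
  have hL0 : 0 < L := by omega
  -- per-theta gain
  have hgain : ∀ θ : ℝ, ε ≤ nint θ → phiB b θ ≤ (b:ℝ) * Real.exp (-δ) := by
    intro θ hθ
    have h1 : phiB b θ ≤ (b:ℝ) - δ' := phiB_gain hb hε0 hε2 hθ
    have h2 : 1 - δ ≤ Real.exp (-δ) := by
      have := Real.add_one_le_exp (-δ)
      linarith
    have h3 : (b:ℝ) * (1 - δ) ≤ (b:ℝ) * Real.exp (-δ) :=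
      mul_le_mul_of_nonneg_left h2 (le_of_lt hb0)
    have h4 : (b:ℝ) * (1 - δ) = (b:ℝ) - δ' := by
      rw [hδ]; field_simp
    linarith
  -- main induction
  have key : ∀ w, w ≤ W →
      ∏ n ∈ Finset.Ioc 0 (w*L), phiB b (α * ((b:ℝ)^n + (b:ℝ)^(2*N - n)))
        ≤ (b:ℝ)^(w*L) * Real.exp (-δ * w) := by
    intro w hw
    induction w with
    | zero => simp
    | succ w ih =>
      have hw' : w ≤ W := by omega
      have hw1 : w + 1 ≤ W := hw
      have hWLM : (w+1)*L ≤ M := le_trans (Nat.mul_le_mul_right L hw1) (Nat.div_mul_le_self M L)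
      have hsplit : ∏ n ∈ Finset.Ioc 0 ((w+1)*L), phiB b (α * ((b:ℝ)^n + (b:ℝ)^(2*N - n)))
          = (∏ n ∈ Finset.Ioc 0 (w*L), phiB b (α * ((b:ℝ)^n + (b:ℝ)^(2*N - n))))
            * ∏ n ∈ Finset.Ioc (w*L) ((w+1)*L), phiB b (α * ((b:ℝ)^n + (b:ℝ)^(2*N - n))) := by
        rw [Finset.prod_Ioc_consecutive _ (Nat.zero_le _) (by nlinarith : w*L ≤ (w+1)*L)]
      have heq : (w+1)*L = w*L + Nat.clog b q + 2 := by
        rw [hL, hD]; ring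
      obtain ⟨m, hm1, hm2, hmgood⟩ := exists_good b hb h k q N hq hgcd (w*L+1) (by omega)
        (by omega : (w*L+1) + Nat.clog b q + 1 ≤ 2*N)
      have hmm : m ∈ Finset.Ioc (w*L) ((w+1)*L) := by
        rw [Finset.mem_Ioc]
        omega
      have hblock : ∏ n ∈ Finset.Ioc (w*L) ((w+1)*L), phiB b (α * ((b:ℝ)^n + (b:ℝ)^(2*N - n)))
          ≤ ((b:ℝ) * Real.exp (-δ)) * (b:ℝ)^(L-1) := by
        rw [← Finset.mul_prod_erase _ _ hmm]
        have hc : ((Finset.Ioc (w*L) ((w+1)*L)).erase m).card = L - 1 := by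
          rw [Finset.card_erase_of_mem hmm, Nat.card_Ioc]
          have : (w+1)*L = w*L + L := by ring
          omega
        have hrest : ∏ n ∈ (Finset.Ioc (w*L) ((w+1)*L)).erase m,
            phiB b (α * ((b:ℝ)^n + (b:ℝ)^(2*N - n))) ≤ (b:ℝ)^(L-1) := by
          rw [← hc, ← Finset.prod_const]
          exact Finset.prod_le_prod (fun i _ => phiB_nonneg _ _) (fun i _ => phiB_le _ _)
        exact mul_le_mul (hgain _ hmgood) hrest
          (Finset.prod_nonneg (fun i _ => phiB_nonneg _ _)) (by positivity)
      rw [hsplit, show ((w+1 : ℕ):ℝ) = (w:ℝ)+1 by push_cast; ring]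
      calc (∏ n ∈ Finset.Ioc 0 (w*L), phiB b (α * ((b:ℝ)^n + (b:ℝ)^(2*N - n))))
            * ∏ n ∈ Finset.Ioc (w*L) ((w+1)*L), phiB b (α * ((b:ℝ)^n + (b:ℝ)^(2*N - n)))
          ≤ ((b:ℝ)^(w*L) * Real.exp (-δ * w)) * (((b:ℝ) * Real.exp (-δ)) * (b:ℝ)^(L-1)) := by
            apply mul_le_mul (ih hw') hblock
              (Finset.prod_nonneg (fun i _ => phiB_nonneg _ _)) (by positivity)
      _ = (b:ℝ)^((w+1)*L) * Real.exp (-δ * ((w:ℝ)+1)) := by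
            have e1 : (b:ℝ) * (b:ℝ)^(L-1) = (b:ℝ)^L := by
              have hLsub : L - 1 + 1 = L := by omega
              rw [← pow_succ', hLsub]
            have e2 : (b:ℝ)^(w*L) * (b:ℝ)^L = (b:ℝ)^((w+1)*L) := by
              rw [← pow_add]
              congr 1
              ring
            have e3 : Real.exp (-δ * w) * Real.exp (-δ) = Real.exp (-δ * ((w:ℝ)+1)) := by
              rw [← Real.exp_add]
              congr 1
              ring
            calc ((b:ℝ)^(w*L) * Real.exp (-δ * w)) * (((b:ℝ) * Real.exp (-δ)) * (b:ℝ)^(L-1))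
                = ((b:ℝ)^(w*L) * ((b:ℝ) * (b:ℝ)^(L-1))) * (Real.exp (-δ * w) * Real.exp (-δ)) := by ring
            _ = (b:ℝ)^((w+1)*L) * Real.exp (-δ * ((w:ℝ)+1)) := by rw [e1, e2, e3]
  -- apply at W, then the tail
  have hWLM : W * L ≤ M := Nat.div_mul_le_self M L
  have htail : ∏ n ∈ Finset.Ioc (W*L) M, phiB b (α * ((b:ℝ)^n + (b:ℝ)^(2*N - n)))
      ≤ (b:ℝ)^(M - W*L) := by
    calc ∏ n ∈ Finset.Ioc (W*L) M, phiB b (α * ((b:ℝ)^n + (b:ℝ)^(2*N - n)))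
        ≤ ∏ n ∈ Finset.Ioc (W*L) M, (b:ℝ) :=
          Finset.prod_le_prod (fun i _ => phiB_nonneg _ _) (fun i _ => phiB_le _ _)
    _ = (b:ℝ)^(M - W*L) := by rw [Finset.prod_const, Nat.card_Ioc]
  have hfullsplit : palProd b N M α
      = (∏ n ∈ Finset.Ioc 0 (W*L), phiB b (α * ((b:ℝ)^n + (b:ℝ)^(2*N - n))))
        * ∏ n ∈ Finset.Ioc (W*L) M, phiB b (α * ((b:ℝ)^n + (b:ℝ)^(2*N - n))) := by
    rw [palProd, Finset.prod_Ioc_consecutive _ (Nat.zero_le _) hWLM]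
    apply Finset.prod_congr _ (fun _ _ => rfl)
    ext x
    simp only [Finset.mem_Icc, Finset.mem_Ioc]
    omega
  have hmain : palProd b N M α ≤ (b:ℝ)^M * Real.exp (-δ * W) := by
    rw [hfullsplit]
    calc _ ≤ ((b:ℝ)^(W*L) * Real.exp (-δ * W)) * (b:ℝ)^(M - W*L) :=
          mul_le_mul (key W le_rfl) htail
            (Finset.prod_nonneg (fun i _ => phiB_nonneg _ _)) (by positivity)
    _ = (b:ℝ)^M * Real.exp (-δ * W) := by
        rw [show (b:ℝ)^(W*L) * Real.exp (-δ * W) * (b:ℝ)^(M - W*L)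
            = ((b:ℝ)^(W*L) * (b:ℝ)^(M - W*L)) * Real.exp (-δ * W) by ring, ← pow_add]
        congr 2
        omega
  -- relate L to log q
  have hD1 : 1 ≤ D := by
    rw [hD]
    exact Nat.clog_pos (by omega) (by omega)
  have hDlog : ((D:ℝ) - 1) * Real.log b ≤ Real.log q := by
    have hlt : b ^ (D - 1) < q := Nat.pow_pred_clog_lt_self (by omega) (by omega)
    have hltR : ((b:ℝ))^((D:ℕ) - 1) ≤ (q:ℝ) := by
      have : ((b^(D-1) : ℕ) : ℝ) ≤ (q:ℝ) := by exact_mod_cast le_of_lt hlt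
      rwa [Nat.cast_pow] at this
    have := Real.log_le_log (by positivity) hltR
    rw [Real.log_pow] at this
    calc ((D:ℝ) - 1) * Real.log b = ((D - 1 : ℕ) : ℝ) * Real.log b := by
          rw [Nat.cast_sub hD1]; norm_num
    _ ≤ Real.log q := this
  have hLlog : (L:ℝ) ≤ K * Real.log q := by
    have h1 : (L:ℝ) = (D:ℝ) + 2 := by rw [hL]; push_cast; ring
    have h2 : (D:ℝ) ≤ Real.log q / Real.log b + 1 := by
      have h2a : (D:ℝ) - 1 ≤ Real.log q / Real.log b := (le_div_iff₀ hlogb).mpr hDlog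
      linarith
    have h3 : Real.log 2 ≤ Real.log q := Real.log_le_log (by norm_num) (by exact_mod_cast hq)
    have h4 : (3:ℝ) ≤ (3/Real.log 2) * Real.log q := by
      rw [div_mul_eq_mul_div, le_div_iff₀ hlog2]
      nlinarith
    have h5 : Real.log q / Real.log b = (1/Real.log b) * Real.log q := by ring
    rw [h1, hK]
    calc (D:ℝ) + 2 ≤ (Real.log q / Real.log b + 1) + 2 := by linarith
    _ = Real.log q / Real.log b + 3 := by ring
    _ ≤ (1/Real.log b) * Real.log q + (3/Real.log 2) * Real.log q := by
        rw [h5]; linarith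
    _ = (1/Real.log b + 3/Real.log 2) * Real.log q := by ring
  -- final comparison
  have hMW : (M:ℝ) ≤ ((W:ℝ) + 1) * (L:ℝ) := by
    have hlt : M < (W + 1) * L := by
      rw [hW]
      have h1 := Nat.div_add_mod M L
      have h2 := Nat.mod_lt M hL0
      calc M = L * (M/L) + M % L := h1.symm
      _ < L * (M/L) + L := Nat.add_lt_add_left h2 _
      _ = (M/L + 1) * L := by ring
    have hltR : (M:ℝ) < (((W+1)*L : ℕ) : ℝ) := by exact_mod_cast hlt
    push_cast at hltR ⊢
    ring_nf at hltR ⊢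
    linarith
  have hfinal : (δ/K) * M / Real.log q ≤ δ * ((W:ℝ) + 1) := by
    rw [div_le_iff₀ hlogq]
    have h1 : (δ/K) * M ≤ (δ/K) * (((W:ℝ)+1) * L) := by
      apply mul_le_mul_of_nonneg_left hMW (by positivity)
    have h2 : (δ/K) * (((W:ℝ)+1) * L) ≤ (δ/K) * (((W:ℝ)+1) * (K * Real.log q)) := by
      apply mul_le_mul_of_nonneg_left _ (by positivity)
      apply mul_le_mul_of_nonneg_left hLlog (by positivity)
    have h3 : (δ/K) * (((W:ℝ)+1) * (K * Real.log q)) = δ * ((W:ℝ)+1) * Real.log q := by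
      field_simp
    linarith
  have hexp : Real.exp (-δ * W) ≤ Real.exp δ * Real.exp (-(δ/K) * M / Real.log q) := by
    rw [← Real.exp_add]
    apply Real.exp_le_exp.mpr
    have : -(δ/K) * M / Real.log q = -((δ/K) * M / Real.log q) := by ring
    rw [this]
    linarith [hfinal]
  calc palProd b N M α ≤ (b:ℝ)^M * Real.exp (-δ * W) := hmain
  _ ≤ (b:ℝ)^M * (Real.exp δ * Real.exp (-(δ/K) * M / Real.log q)) := by
      apply mul_le_mul_of_nonneg_left hexp (by positivity)
  _ = Real.exp δ * (b:ℝ)^M * Real.exp (-(δ/K) * M / Real.log q) := by ring
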